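/- Let (θ₁, φ₁), (θ₂, φ₂), (θ₃, φ₃) be independent, each uniformly distributed on [0,2π]², and set hᵢ := sin θᵢ·sin φᵢ. Then for every real a, E[cos(a·(h₁ − h₃))·cos(a·(h₂ − h₃))] = (1/2)·J₀(a/2)⁴·(1 + J₀(a)²). -/

import Mathlib

open Real MeasureTheory Finset

/-- Bessel function of the first kind of order zero (integral representation). -/
noncomputable def J₀ (x : ℝ) : ℝ :=
  (1 / (2 * π)) * ∫ t in (0:ℝ)..(2 * π), Real.cos (x * Real.sin t)

/-- Expectation over three independent pairs of angles, each uniform on `[0, 2π]²`. -/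
noncomputable def E6 (f : ℝ → ℝ → ℝ → ℝ → ℝ → ℝ → ℝ) : ℝ :=
  (1 / (2 * π) ^ 6) *
    ∫ θ₁ in (0:ℝ)..(2 * π), ∫ φ₁ in (0:ℝ)..(2 * π),
      ∫ θ₂ in (0:ℝ)..(2 * π), ∫ φ₂ in (0:ℝ)..(2 * π),
        ∫ θ₃ in (0:ℝ)..(2 * π), ∫ φ₃ in (0:ℝ)..(2 * π), f θ₁ φ₁ θ₂ φ₂ θ₃ φ₃

/-
Write hᵢ = sin θᵢ sin φᵢ. Since cos A cos B = (cos (A - B) + cos (A + B)) / 2, the integrand is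
a combination of terms cos (x + c h) with h the product for one pair of angles, so everything
reduces to one average: averaging over φ gives cos x · J₀ (c sin θ), and averaging J₀ (2c sin θ)
over θ gives J₀ (c)². For the latter, J₀ (c)² is the double average of cos (c (sin u - sin v));
by sin u - sin v = 2 sin ((u - v)/2) cos ((u + v)/2) and the substitution w = u - v this becomes
the double average of cos (2c sin (w/2) cos (u - w/2)), whose average in u is J₀ (2c sin (w/2)),
and w ↦ J₀ (2c sin (w/2)) has the same average as θ ↦ J₀ (2c sin θ) by π-periodicity.
Averaging the three pairs in turn gives the formula.
-/

open Function

namespace Function.Periodic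

variable {E : Type*} [NormedAddCommGroup E] [NormedSpace ℝ E] {f : ℝ → E} {T : ℝ}

lemma intervalIntegral_comp_add_right (hf : Periodic f T) (d : ℝ) :
    ∫ x in 0..T, f (x + d) = ∫ x in 0..T, f x := by
  rw [intervalIntegral.integral_comp_add_right, zero_add, add_comm T d]
  simpa using hf.intervalIntegral_add_eq d 0

lemma intervalIntegral_comp_div_two (hf : Periodic f T)
    (hint : ∀ t₁ t₂, IntervalIntegrable f volume t₁ t₂) :
    ∫ x in 0..2 * T, f (x / 2) = ∫ x in 0..2 * T, f x := by
  rw [intervalIntegral.integral_comp_div f two_ne_zero, zero_div,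
    mul_div_cancel_left₀ T two_ne_zero, two_mul, hf.intervalIntegral_add_eq_add 0 T hint,
    zero_add, two_smul]

end Function.Periodic

lemma intervalIntegral_intervalIntegral_add {E : Type*} [NormedAddCommGroup E] [NormedSpace ℝ E]
    {f g : ℝ → ℝ → E} (hf : Continuous (uncurry f)) (hg : Continuous (uncurry g)) (a b c d : ℝ) :
    ∫ x in a..b, ∫ y in c..d, (f x y + g x y) =
      (∫ x in a..b, ∫ y in c..d, f x y) + ∫ x in a..b, ∫ y in c..d, g x y := by
  have hf' (x : ℝ) : Continuous (f x) := hf.uncurry_left x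
  have hg' (x : ℝ) : Continuous (g x) := hg.uncurry_left x
  rw [intervalIntegral.integral_congr fun x _ => intervalIntegral.integral_add
    ((hf' x).intervalIntegrable c d) ((hg' x).intervalIntegrable c d)]
  exact intervalIntegral.integral_add (Continuous.intervalIntegrable (by fun_prop) a b)
    (Continuous.intervalIntegrable (by fun_prop) a b)

lemma integral_cos_mul_sin (x : ℝ) : ∫ t in 0..2 * π, cos (x * sin t) = 2 * π * J₀ x := by
  rw [J₀]
  field_simp

lemma J₀_neg (x : ℝ) : J₀ (-x) = J₀ x := by
  simp [J₀]

lemma continuous_J₀ : Continuous J₀ := by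
  unfold J₀
  fun_prop

lemma integral_sin_mul_sin (c : ℝ) : ∫ t in 0..2 * π, sin (c * sin t) = 0 := by
  have hper : Periodic (fun t => sin (c * sin t)) (2 * π) := fun t => by simp [sin_add_two_pi]
  have h := hper.intervalIntegral_comp_add_right π
  simp only [sin_add_pi, mul_neg, sin_neg, intervalIntegral.integral_neg] at h
  linarith

lemma integral_cos_add_mul_sin (x c : ℝ) :
    ∫ t in 0..2 * π, cos (x + c * sin t) = 2 * π * J₀ c * cos x := by
  simp_rw [cos_add]
  rw [intervalIntegral.integral_sub (Continuous.intervalIntegrable (by fun_prop) _ _)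
      (Continuous.intervalIntegrable (by fun_prop) _ _),
    intervalIntegral.integral_const_mul, intervalIntegral.integral_const_mul,
    integral_sin_mul_sin, integral_cos_mul_sin]
  ring

lemma integral_integral_cos_mul_sin_sub_sin (c : ℝ) :
    ∫ u in 0..2 * π, ∫ v in 0..2 * π, cos (c * (sin u - sin v)) = (2 * π * J₀ c) ^ 2 := by
  have inner (u : ℝ) :
      ∫ v in 0..2 * π, cos (c * (sin u - sin v)) = 2 * π * J₀ c * cos (c * sin u) := by
    rw [← J₀_neg, ← integral_cos_add_mul_sin]
    congr 1
    ext v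
    ring_nf
  simp_rw [inner, intervalIntegral.integral_const_mul, integral_cos_mul_sin]
  ring

lemma integral_cos_mul_cos_sub (b d : ℝ) :
    ∫ u in 0..2 * π, cos (b * cos (u - d)) = 2 * π * J₀ b := by
  have hper : Periodic (fun u => cos (b * sin u)) (2 * π) := fun u => by simp [sin_add_two_pi]
  rw [← integral_cos_mul_sin, ← hper.intervalIntegral_comp_add_right (π / 2 - d)]
  congr 1
  ext u
  rw [show u + (π / 2 - d) = u - d + π / 2 by ring, sin_add_pi_div_two]

lemma integral_cos_mul_sin_sub_sin_eq (c u : ℝ) :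
    ∫ v in 0..2 * π, cos (c * (sin u - sin v)) =
      ∫ w in 0..2 * π, cos (2 * c * sin (w / 2) * cos (u - w / 2)) := by
  set g := fun w => cos (2 * c * sin (w / 2) * cos (u - w / 2)) with hg
  have hper : Periodic g (2 * π) := fun w => by
    simp only [hg, show (w + 2 * π) / 2 = w / 2 + π by ring, sin_add_pi,
      show u - (w / 2 + π) = u - w / 2 - π by ring, cos_sub_pi]
    ring_nf
  have hsub (v : ℝ) : cos (c * (sin u - sin v)) = g (u - v) := by
    simp only [hg, sin_sub_sin, show u - (u - v) / 2 = (u + v) / 2 by ring]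
    ring_nf
  simp_rw [hsub]
  rw [intervalIntegral.integral_comp_sub_left g u]
  simpa using hper.intervalIntegral_add_eq (u - 2 * π) 0

lemma integral_J₀_two_mul_mul_sin (c : ℝ) :
    ∫ t in 0..2 * π, J₀ (2 * c * sin t) = 2 * π * J₀ c ^ 2 := by
  have hper : Periodic (fun t => J₀ (2 * c * sin t)) π := fun t => by
    simp [sin_add_pi, J₀_neg]
  have hcont : Continuous fun t => J₀ (2 * c * sin t) := continuous_J₀.comp (by fun_prop)
  have hF : Continuous (uncurry fun u w => cos (2 * c * sin (w / 2) * cos (u - w / 2))) := by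
    fun_prop
  refine mul_left_cancel₀ (by positivity : 2 * π ≠ 0) ?_
  calc 2 * π * ∫ t in 0..2 * π, J₀ (2 * c * sin t)
      = 2 * π * ∫ w in 0..2 * π, J₀ (2 * c * sin (w / 2)) := by
        rw [hper.intervalIntegral_comp_div_two fun _ _ => hcont.intervalIntegrable _ _]
    _ = ∫ w in 0..2 * π, ∫ u in 0..2 * π, cos (2 * c * sin (w / 2) * cos (u - w / 2)) := by
        simp_rw [integral_cos_mul_cos_sub, intervalIntegral.integral_const_mul]
    _ = ∫ u in 0..2 * π, ∫ w in 0..2 * π, cos (2 * c * sin (w / 2) * cos (u - w / 2)) :=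
        (intervalIntegral_intervalIntegral_swap ((hF.continuousOn.integrableOn_compact
          (isCompact_uIcc.prod isCompact_uIcc)).mono_set
          (Set.prod_mono Set.uIoc_subset_uIcc Set.uIoc_subset_uIcc))).symm
    _ = ∫ u in 0..2 * π, ∫ v in 0..2 * π, cos (c * (sin u - sin v)) := by
        simp_rw [integral_cos_mul_sin_sub_sin_eq]
    _ = 2 * π * (2 * π * J₀ c ^ 2) := by
        rw [integral_integral_cos_mul_sin_sub_sin]
        ring

lemma integral_integral_cos_add_mul_sin_mul_sin (x c : ℝ) :
    ∫ θ in 0..2 * π, ∫ φ in 0..2 * π, cos (x + c * (sin θ * sin φ)) =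
      (2 * π) ^ 2 * J₀ (c / 2) ^ 2 * cos x := by
  have key := integral_J₀_two_mul_mul_sin (c / 2)
  rw [show 2 * (c / 2) = c by ring] at key
  simp_rw [← mul_assoc, integral_cos_add_mul_sin, intervalIntegral.integral_mul_const,
    intervalIntegral.integral_const_mul, key]
  ring

lemma integral_integral_cos_mul_sin_mul_sin (c : ℝ) :
    ∫ θ in 0..2 * π, ∫ φ in 0..2 * π, cos (c * (sin θ * sin φ)) =
      (2 * π) ^ 2 * J₀ (c / 2) ^ 2 := by
  simpa using integral_integral_cos_add_mul_sin_mul_sin 0 c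

lemma integral_integral_cos_sub_add_mul_cos_add (z c L : ℝ) :
    ∫ θ in 0..2 * π, ∫ φ in 0..2 * π,
      (cos (z - c * (sin θ * sin φ)) + L * cos (z + c * (sin θ * sin φ))) =
      (2 * π) ^ 2 * (1 + L) * J₀ (c / 2) ^ 2 * cos z := by
  simp_rw [sub_eq_add_neg, ← neg_mul]
  rw [intervalIntegral_intervalIntegral_add (by fun_prop) (by fun_prop)]
  simp only [intervalIntegral.integral_const_mul, integral_integral_cos_add_mul_sin_mul_sin,
    neg_div, J₀_neg]
  ring

lemma integral_integral_cos_mul_sub_mul_cos_mul_sub (a x y : ℝ) :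
    ∫ θ in 0..2 * π, ∫ φ in 0..2 * π,
      cos (a * (x - sin θ * sin φ)) * cos (a * (y - sin θ * sin φ)) =
      (2 * π) ^ 2 / 2 * (cos (a * x - a * y) + J₀ a ^ 2 * cos (a * x + a * y)) := by
  have hprod (θ φ : ℝ) : cos (a * (x - sin θ * sin φ)) * cos (a * (y - sin θ * sin φ)) =
      cos (a * x - a * y) / 2 + cos (a * x + a * y + (-2 * a) * (sin θ * sin φ)) / 2 := by
    rw [show a * x - a * y = a * (x - sin θ * sin φ) - a * (y - sin θ * sin φ) by ring,
      show a * x + a * y + (-2 * a) * (sin θ * sin φ) =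
        a * (x - sin θ * sin φ) + a * (y - sin θ * sin φ) by ring, cos_sub, cos_add]
    ring
  simp_rw [hprod]
  rw [intervalIntegral_intervalIntegral_add (by fun_prop) (by fun_prop)]
  simp only [intervalIntegral.integral_const, intervalIntegral.integral_div,
    integral_integral_cos_add_mul_sin_mul_sin, show -2 * a / 2 = -a by ring, J₀_neg,
    smul_eq_mul]
  ring

theorem stmt_6 (a : ℝ) :
    E6 (fun θ₁ φ₁ θ₂ φ₂ θ₃ φ₃ =>
      Real.cos (a * (Real.sin θ₁ * Real.sin φ₁ - Real.sin θ₃ * Real.sin φ₃)) *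
      Real.cos (a * (Real.sin θ₂ * Real.sin φ₂ - Real.sin θ₃ * Real.sin φ₃)))
    = (1 / 2) * (J₀ (a / 2)) ^ 4 * (1 + (J₀ a) ^ 2) := by
  simp only [E6, integral_integral_cos_mul_sub_mul_cos_mul_sub, intervalIntegral.integral_const_mul,
    integral_integral_cos_sub_add_mul_cos_add, integral_integral_cos_mul_sin_mul_sin]
  field_simp
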